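/- Let -1 ≤ β < α < 1 with α > 0, and set λ = (1-α)/(α-β). Let G be an n-vertex graph with adjacency matrix A, and suppose one of the following holds for a positive integer r: (1) λI - A is positive definite and r = n; (2) λI - A is positive semidefinite and singular and r = rank(λI - A) + 1; (3) λI - A has exactly one negative eigenvalue, the all-ones vector j lies in the column space of λI - A, jᵀNj ≤ (α-β)/(-α) for every {1}-inverse N of λI - A, and r = rank(λI - A) - 1 if jᵀNj = (α-β)/(-α) while r = rank(λI - A) otherwise. Then there exists a spherical {α,β}-code S in ℝ^r of size n and rank r whose associated β-graph is G; that is, there are unit vectors u₁,…,uₙ in ℝ^r such that for all i ≠ j, uᵢ·uⱼ = β if vertices i and j are adjacent in G and uᵢ·uⱼ = α otherwise. -/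

import Mathlib

open Matrix

noncomputable section

/-- The real inner product on `ℝ^d`. -/
def rinner {d : ℕ} (x y : EuclideanSpace ℝ (Fin d)) : ℝ := inner ℝ x y

/-- A spherical `{α, β}`-code in `ℝ^d`: a family of unit vectors whose pairwise inner
products of distinct vectors lie in `{α, β}`. -/
def IsSphericalCode (α β : ℝ) {d n : ℕ} (u : Fin n → EuclideanSpace ℝ (Fin d)) : Prop :=
  (∀ i, ‖u i‖ = 1) ∧ ∀ i j, i ≠ j → rinner (u i) (u j) = α ∨ rinner (u i) (u j) = β

/-- Adjacency matrix of the associated `β`-graph `Γ_β(S)`. -/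
def betaAdj (β : ℝ) {d n : ℕ} (u : Fin n → EuclideanSpace ℝ (Fin d)) :
    Matrix (Fin n) (Fin n) ℝ :=
  Matrix.of fun i j => if i ≠ j ∧ rinner (u i) (u j) = β then 1 else 0

/-!
The Gram matrix of the code has to be `Γ = (α - β) M + α J` with `M = λI - A` and `J = j jᵀ`:
its diagonal is `(α - β) λ + α = 1` and its off-diagonal entries are `β` on edges and `α`
elsewhere. A positive semidefinite matrix of rank `r` is the Gram matrix of vectors in `ℝ^r`
spanning an `r`-dimensional space, so it suffices to show `Γ ⪰ 0` with `rank Γ = r`.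

(1) If `M ≻ 0` then `Γ ≻ 0`. (2) If `M ⪰ 0` then `ker Γ = ker M ∩ j^⊥`; for `v ∈ ker M` also
`|v| ∈ ker M`, because the off-diagonal entries of `M` are `≤ 0`, and `jᵀ|v| > 0`, so the kernel
loses one dimension. (3) If `Mx = j` then `jᵀNj = jᵀx =: t` for every `{1}`-inverse `N`, and
`xᵀMx = t < 0`. As `M` has a single negative eigenvalue, the Cauchy–Schwarz inequality reverses
to `t · yᵀMy ≤ (jᵀy)²`, which gives `Γ ⪰ 0` once `(α - β) + α t ≤ 0`. Since
`Γy = M((α - β) y + α (jᵀy) x)`, the kernel of `Γ` is `ker M ⊕ ℝx` when `(α - β) + α t = 0`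
and `ker M` otherwise.
-/

open Module LinearMap
open scoped ComplexOrder

theorem LinearMap.exists_comp_comp_eq_self {K V W : Type*} [DivisionRing K] [AddCommGroup V]
    [Module K V] [AddCommGroup W] [Module K W] (f : V →ₗ[K] W) :
    ∃ g : W →ₗ[K] V, f ∘ₗ g ∘ₗ f = f := by
  obtain ⟨s, hs⟩ := f.rangeRestrict.exists_rightInverse_of_surjective f.range_rangeRestrict
  obtain ⟨p, hp⟩ := f.range.subtype.exists_leftInverse_of_injective f.range.ker_subtype
  refine ⟨s ∘ₗ p, LinearMap.ext fun v => ?_⟩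
  have hpf : p (f v) = f.rangeRestrict v := LinearMap.congr_fun hp (f.rangeRestrict v)
  simpa [hpf] using congr_arg Subtype.val (LinearMap.congr_fun hs (f.rangeRestrict v))

theorem Submodule.finrank_inf_ker_add_one {K V : Type*} [Field K] [AddCommGroup V] [Module K V]
    [FiniteDimensional K V] (p : Submodule K V) (φ : Dual K V) {w : V} (hw : w ∈ p)
    (hφw : φ w ≠ 0) : finrank K ↥(p ⊓ ker φ) + 1 = finrank K p := by
  have hne : φ ∘ₗ p.subtype ≠ 0 := fun h => hφw (LinearMap.congr_fun h ⟨w, hw⟩)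
  rw [← Dual.finrank_ker_add_one_of_ne_zero hne, ker_comp, ← Submodule.finrank_map_subtype_eq,
    Submodule.map_comap_subtype]

namespace Matrix

theorem exists_mul_mul_eq_self {K m n : Type*} [Field K] [Fintype m] [Fintype n]
    (A : Matrix m n K) : ∃ N : Matrix n m K, A * N * A = A := by
  classical
  obtain ⟨g, hg⟩ := (toLin' A).exists_comp_comp_eq_self
  refine ⟨LinearMap.toMatrix' g, toLin'.injective ?_⟩
  rw [toLin'_mul, toLin'_mul, toLin'_toMatrix', LinearMap.comp_assoc, hg]

theorem rank_add_finrank_ker_mulVecLin {K n : Type*} [Field K] [Fintype n]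
    (A : Matrix n n K) : A.rank + finrank K (ker A.mulVecLin) = Fintype.card n := by
  have := A.mulVecLin.finrank_range_add_finrank_ker
  rwa [finrank_fintype_fun_eq_card] at this

theorem IsSymm.mulVec_dotProduct {R n : Type*} [CommSemiring R] [Fintype n]
    {A : Matrix n n R} (hA : A.IsSymm) (x y : n → R) : (A *ᵥ x) ⬝ᵥ y = x ⬝ᵥ A *ᵥ y := by
  rw [dotProduct_mulVec, ← mulVec_transpose, hA.eq]

theorem IsSymm.mulVec_dotProduct_mulVec_of_mul_mul_eq_self {R n : Type*} [CommSemiring R]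
    [Fintype n] {A N : Matrix n n R} (hA : A.IsSymm) (hN : A * N * A = A) (x : n → R) :
    (A *ᵥ x) ⬝ᵥ N *ᵥ A *ᵥ x = x ⬝ᵥ A *ᵥ x := by
  rw [hA.mulVec_dotProduct]
  simp only [mulVec_mulVec, ← Matrix.mul_assoc, hN]

theorem PosSemidef.mulVec_abs_eq_zero {n : Type*} [Fintype n] {M : Matrix n n ℝ}
    (hM : M.PosSemidef) (hoff : ∀ i k, i ≠ k → M i k ≤ 0) {v : n → ℝ} (hv : M *ᵥ v = 0) :
    M *ᵥ |v| = 0 := by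
  have hle : |v| ⬝ᵥ M *ᵥ |v| ≤ v ⬝ᵥ M *ᵥ v := by
    simp only [dot_mulVec_eq_sum_sum, Pi.abs_apply]
    refine Finset.sum_le_sum fun k _ => Finset.sum_le_sum fun i _ => ?_
    rcases eq_or_ne i k with rfl | hik
    · rw [mul_right_comm, abs_mul_abs_self, mul_right_comm]
    · have h := mul_le_mul_of_nonpos_left (abs_mul (v i) (v k) ▸ le_abs_self (v i * v k))
        (hoff i k hik)
      linarith
  rw [hv, dotProduct_zero] at hle
  refine (hM.dotProduct_mulVec_zero_iff |v|).mp (le_antisymm ?_ (hM.dotProduct_mulVec_nonneg _))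
  simpa using hle

theorem IsHermitian.dotProduct_mulVec_eq_sum_eigenvalues {n : Type*} [Fintype n]
    [DecidableEq n] {A : Matrix n n ℝ} (hA : A.IsHermitian) (x y : n → ℝ) :
    x ⬝ᵥ A *ᵥ y = ∑ k, hA.eigenvalues k *
      (star (hA.eigenvectorUnitary : Matrix n n ℝ) *ᵥ x) k *
      (star (hA.eigenvectorUnitary : Matrix n n ℝ) *ᵥ y) k := by
  set V : Matrix n n ℝ := (hA.eigenvectorUnitary : Matrix n n ℝ)
  have hstar : star V = Vᵀ := conjTranspose_eq_transpose_of_trivial V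
  conv_lhs => rw [hA.spectral_theorem, Unitary.conjStarAlgAut_apply]
  rw [hstar, ← mulVec_mulVec, ← mulVec_mulVec, dotProduct_mulVec, ← mulVec_transpose]
  simp only [mulVec_diagonal, dotProduct, Function.comp_apply, RCLike.ofReal_real_eq_id, id_eq]
  exact Finset.sum_congr rfl fun k _ => by ring

end Matrix

theorem sum_mul_mul_sum_le_sq_of_card_neg_le_one {ι : Type*} [Fintype ι] (μ a b : ι → ℝ)
    (hμ : (Finset.univ.filter fun i => μ i < 0).card ≤ 1) (ha : ∑ i, μ i * a i * a i < 0) :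
    (∑ i, μ i * a i * a i) * (∑ i, μ i * b i * b i) ≤ (∑ i, μ i * a i * b i) ^ 2 := by
  obtain ⟨i₀, hi₀⟩ : ∃ i, μ i < 0 := by
    by_contra! h
    exact ha.not_ge (Finset.sum_nonneg fun i _ => by nlinarith [h i, mul_self_nonneg (a i)])
  have hμ_nonneg : ∀ i ≠ i₀, 0 ≤ μ i := fun i hi => not_lt.mp fun h =>
    hi (Finset.card_le_one.mp hμ i (by simp [h]) i₀ (by simp [hi₀]))
  have hvanish : ∀ c : ι → ℝ, c i₀ = 0 → 0 ≤ ∑ i, μ i * c i * c i := fun c hc =>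
    Finset.sum_nonneg fun i _ => by
      rcases eq_or_ne i i₀ with rfl | hi
      · simp [hc]
      · nlinarith [hμ_nonneg i hi, mul_self_nonneg (c i)]
  have ha₀ : a i₀ ≠ 0 := fun h => ha.not_ge (hvanish a h)
  have hc := hvanish (fun i => b i₀ * a i - a i₀ * b i) (by ring)
  have hexp : ∑ i, μ i * (b i₀ * a i - a i₀ * b i) * (b i₀ * a i - a i₀ * b i) =
      b i₀ ^ 2 * (∑ i, μ i * a i * a i) - 2 * b i₀ * a i₀ * (∑ i, μ i * a i * b i)
        + a i₀ ^ 2 * (∑ i, μ i * b i * b i) := by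
    simp only [Finset.mul_sum, ← Finset.sum_sub_distrib, ← Finset.sum_add_distrib]
    exact Finset.sum_congr rfl fun i _ => by ring
  rw [hexp] at hc
  set A := ∑ i, μ i * a i * a i
  set B := ∑ i, μ i * a i * b i
  set C := ∑ i, μ i * b i * b i
  -- `A · (b₀² A - 2 a₀ b₀ B + a₀² C) = (b₀ A - a₀ B)² + a₀² (A C - B²)` with the left side `≤ 0`
  nlinarith [sq_nonneg (b i₀ * A - a i₀ * B), sq_pos_of_ne_zero ha₀,
    mul_nonneg hc (neg_nonneg.mpr ha.le)]

theorem Matrix.IsHermitian.mul_le_sq_of_card_neg_le_one {n : Type*} [Fintype n] [DecidableEq n]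
    {A : Matrix n n ℝ} (hA : A.IsHermitian)
    (hneg : (Finset.univ.filter fun i => hA.eigenvalues i < 0).card ≤ 1) {x : n → ℝ}
    (hx : x ⬝ᵥ A *ᵥ x < 0) (y : n → ℝ) :
    (x ⬝ᵥ A *ᵥ x) * (y ⬝ᵥ A *ᵥ y) ≤ (x ⬝ᵥ A *ᵥ y) ^ 2 := by
  simp only [hA.dotProduct_mulVec_eq_sum_eigenvalues] at hx ⊢
  exact sum_mul_mul_sum_le_sq_of_card_neg_le_one _ _ _ hneg hx

namespace Matrix

variable {𝕜 : Type*} [RCLike 𝕜]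

theorem rank_gram {E ι : Type*} [NormedAddCommGroup E] [InnerProductSpace 𝕜 E]
    [FiniteDimensional 𝕜 E] [Fintype ι] (v : ι → E) :
    (gram 𝕜 v).rank = finrank 𝕜 (Submodule.span 𝕜 (Set.range v)) := by
  let e := (stdOrthonormalBasis 𝕜 E).repr.toLinearEquiv.trans (WithLp.linearEquiv 2 𝕜 _)
  have hcols : Set.range (of fun i j => ((stdOrthonormalBasis 𝕜 E).repr (v j)).ofLp i).col =
      e '' Set.range v := by
    rw [← Set.range_comp]; rfl
  rw [gram_eq_conjTranspose_mul (stdOrthonormalBasis 𝕜 E), rank_conjTranspose_mul_self,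
    rank_eq_finrank_span_cols, hcols, ← LinearEquiv.coe_toLinearMap, ← Submodule.map_span,
    LinearEquiv.finrank_map_eq]

variable {ι : Type*} [Fintype ι] {B : Matrix ι ι 𝕜}

theorem PosSemidef.exists_gram_eq (hB : B.PosSemidef) :
    ∃ w : ι → EuclideanSpace 𝕜 ι, gram 𝕜 w = B := by
  classical
  open scoped MatrixOrder in
  obtain ⟨X, rfl⟩ := CStarAlgebra.nonneg_iff_eq_star_mul_self.mp hB.nonneg
  refine ⟨fun j => WithLp.toLp 2 fun k => X k j, ?_⟩
  ext i j
  simp [gram, mul_apply, PiLp.inner_apply, mul_comm]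

theorem PosSemidef.exists_gram_eq_of_rank_eq (hB : B.PosSemidef) {r : ℕ} (hr : B.rank = r) :
    ∃ u : ι → EuclideanSpace 𝕜 (Fin r), gram 𝕜 u = B := by
  obtain ⟨w, rfl⟩ := hB.exists_gram_eq
  set S := Submodule.span 𝕜 (Set.range w)
  have hS : finrank 𝕜 S = r := by rw [← rank_gram, hr]
  let e := ((stdOrthonormalBasis 𝕜 S).reindex (finCongr hS)).repr
  refine ⟨fun i => e ⟨w i, Submodule.subset_span ⟨i, rfl⟩⟩, ?_⟩
  ext i j
  simp [gram, LinearIsometryEquiv.inner_map_map]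

end Matrix

section RankOneUpdate

variable {n : Type*} [Fintype n] {M : Matrix n n ℝ} {a b : ℝ} {j x : n → ℝ}

theorem smul_add_smul_vecMulVec_mulVec (M : Matrix n n ℝ) (a b : ℝ) (j y : n → ℝ) :
    (a • M + b • vecMulVec j j) *ᵥ y = a • M *ᵥ y + (b * (j ⬝ᵥ y)) • j := by
  rw [add_mulVec, smul_mulVec, smul_mulVec, vecMulVec_mulVec, op_smul_eq_smul, smul_smul]

theorem dotProduct_smul_add_smul_vecMulVec_mulVec (M : Matrix n n ℝ) (a b : ℝ) (j y : n → ℝ) :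
    y ⬝ᵥ (a • M + b • vecMulVec j j) *ᵥ y = a * (y ⬝ᵥ M *ᵥ y) + b * (j ⬝ᵥ y) ^ 2 := by
  rw [smul_add_smul_vecMulVec_mulVec, dotProduct_add, dotProduct_smul, dotProduct_smul,
    dotProduct_comm y j, smul_eq_mul, smul_eq_mul]
  ring

theorem posSemidef_smul_add_smul_vecMulVec (hM : M.PosSemidef) (ha : 0 ≤ a) (hb : 0 ≤ b) :
    (a • M + b • vecMulVec j j).PosSemidef :=
  (hM.smul ha).add (by simpa using (posSemidef_vecMulVec_self_star j).smul hb)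

theorem posDef_smul_add_smul_vecMulVec (hM : M.PosDef) (ha : 0 < a) (hb : 0 ≤ b) :
    (a • M + b • vecMulVec j j).PosDef :=
  (hM.smul ha).add_posSemidef (by simpa using (posSemidef_vecMulVec_self_star j).smul hb)

theorem ker_smul_add_smul_vecMulVec_of_posSemidef (hM : M.PosSemidef) (ha : 0 < a) (hb : 0 < b) :
    ker (a • M + b • vecMulVec j j).mulVecLin = ker M.mulVecLin ⊓ ker (dotProductBilin ℝ ℝ j) := by
  ext y
  simp only [mem_ker, Submodule.mem_inf, mulVecLin_apply, dotProductBilin_apply_apply]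
  constructor
  · intro hy
    have hq := dotProduct_smul_add_smul_vecMulVec_mulVec M a b j y
    have hMy : 0 ≤ y ⬝ᵥ M *ᵥ y := by simpa using hM.dotProduct_mulVec_nonneg y
    rw [hy, dotProduct_zero] at hq
    obtain ⟨hMy₀, hjy₀⟩ := (add_eq_zero_iff_of_nonneg (mul_nonneg ha.le hMy)
      (mul_nonneg hb.le (sq_nonneg _))).mp hq.symm
    refine ⟨(hM.dotProduct_mulVec_zero_iff y).mp ?_, ?_⟩
    · simpa [ha.ne'] using hMy₀
    · simpa [hb.ne'] using hjy₀
  · rintro ⟨hMy, hjy⟩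
    simp [smul_add_smul_vecMulVec_mulVec, hMy, hjy]

theorem rank_smul_add_smul_vecMulVec_of_det_eq_zero [DecidableEq n] (hM : M.PosSemidef)
    (hoff : ∀ i k, i ≠ k → M i k ≤ 0) (hdet : M.det = 0) (hj : ∀ i, 0 < j i)
    (ha : 0 < a) (hb : 0 < b) : (a • M + b • vecMulVec j j).rank = M.rank + 1 := by
  obtain ⟨v, hv, hMv⟩ := exists_mulVec_eq_zero_iff.mpr hdet
  have hjv : dotProductBilin ℝ ℝ j |v| ≠ 0 := by
    obtain ⟨i, hi⟩ := Function.ne_iff.mp hv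
    exact (Finset.sum_pos' (fun k _ => mul_nonneg (hj k).le (abs_nonneg _))
      ⟨i, Finset.mem_univ _, mul_pos (hj i) (abs_pos.mpr hi)⟩).ne'
  have hker := Submodule.finrank_inf_ker_add_one _ _
    (show |v| ∈ ker M.mulVecLin from hM.mulVec_abs_eq_zero hoff hMv) hjv
  have h₁ := (a • M + b • vecMulVec j j).rank_add_finrank_ker_mulVecLin
  have h₂ := M.rank_add_finrank_ker_mulVecLin
  rw [ker_smul_add_smul_vecMulVec_of_posSemidef hM ha hb] at h₁
  omega

theorem smul_add_smul_vecMulVec_mulVec_eq_mulVec (hx : M *ᵥ x = j) (y : n → ℝ) :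
    (a • M + b • vecMulVec j j) *ᵥ y = M *ᵥ (a • y + (b * (j ⬝ᵥ y)) • x) := by
  rw [mulVec_add, mulVec_smul, mulVec_smul, hx, smul_add_smul_vecMulVec_mulVec]

theorem ker_le_ker_smul_add_smul_vecMulVec (hM : M.IsSymm) (hx : M *ᵥ x = j) :
    ker M.mulVecLin ≤ ker (a • M + b • vecMulVec j j).mulVecLin := by
  intro y hy
  simp only [mem_ker, mulVecLin_apply] at hy ⊢
  have hjy : j ⬝ᵥ y = 0 := by rw [← hx, hM.mulVec_dotProduct, hy, dotProduct_zero]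
  simp [smul_add_smul_vecMulVec_mulVec, hy, hjy]

theorem ker_smul_add_smul_vecMulVec_of_eq (hM : M.IsSymm) (hx : M *ᵥ x = j) (ha : a ≠ 0)
    (h : a + b * (j ⬝ᵥ x) = 0) :
    ker (a • M + b • vecMulVec j j).mulVecLin = ker M.mulVecLin ⊔ Submodule.span ℝ {x} := by
  refine le_antisymm (fun y hy => Submodule.mem_sup.mpr ?_) (sup_le
    (ker_le_ker_smul_add_smul_vecMulVec hM hx) ?_)
  · refine ⟨a⁻¹ • (a • y + (b * (j ⬝ᵥ y)) • x), ?_, (-(a⁻¹ * (b * (j ⬝ᵥ y)))) • x,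
      Submodule.smul_mem _ _ (Submodule.mem_span_singleton_self x), ?_⟩
    · refine Submodule.smul_mem _ _ ?_
      rw [mem_ker, mulVecLin_apply, ← smul_add_smul_vecMulVec_mulVec_eq_mulVec hx]
      exact hy
    · match_scalars
      · field_simp
      · ring
  · rw [Submodule.span_singleton_le_iff_mem, mem_ker, mulVecLin_apply,
      smul_add_smul_vecMulVec_mulVec, hx, ← add_smul, h, zero_smul]

theorem ker_smul_add_smul_vecMulVec_of_ne (hM : M.IsSymm) (hx : M *ᵥ x = j) (ha : a ≠ 0)
    (h : a + b * (j ⬝ᵥ x) ≠ 0) :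
    ker (a • M + b • vecMulVec j j).mulVecLin = ker M.mulVecLin := by
  refine le_antisymm (fun y hy => ?_) (ker_le_ker_smul_add_smul_vecMulVec hM hx)
  simp only [mem_ker, mulVecLin_apply] at hy ⊢
  have hxy : x ⬝ᵥ (a • M + b • vecMulVec j j) *ᵥ y = (a + b * (j ⬝ᵥ x)) * (j ⬝ᵥ y) := by
    rw [smul_add_smul_vecMulVec_mulVec, dotProduct_add, dotProduct_smul, dotProduct_smul,
      ← hM.mulVec_dotProduct, hx, dotProduct_comm x j, smul_eq_mul, smul_eq_mul]
    ring
  rw [hy, dotProduct_zero] at hxy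
  have hjy : j ⬝ᵥ y = 0 := (mul_eq_zero.mp hxy.symm).resolve_left h
  rw [smul_add_smul_vecMulVec_mulVec, hjy, mul_zero, zero_smul, add_zero] at hy
  exact (smul_eq_zero.mp hy).resolve_left ha

theorem rank_smul_add_smul_vecMulVec_of_mulVec_eq (hM : M.IsSymm) (hx : M *ᵥ x = j)
    (ha : a ≠ 0) (hj : j ≠ 0) :
    ((a • M + b • vecMulVec j j).rank : ℤ) =
      if a + b * (j ⬝ᵥ x) = 0 then (M.rank : ℤ) - 1 else M.rank := by
  have h₁ := (a • M + b • vecMulVec j j).rank_add_finrank_ker_mulVecLin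
  have h₂ := M.rank_add_finrank_ker_mulVecLin
  split_ifs with h
  · have hxM : x ∉ ker M.mulVecLin := by simpa [hx] using hj
    rw [ker_smul_add_smul_vecMulVec_of_eq hM hx ha h,
      Submodule.finrank_sup_span_singleton hxM] at h₁
    omega
  · rw [ker_smul_add_smul_vecMulVec_of_ne hM hx ha h] at h₁
    omega

theorem posSemidef_smul_add_smul_vecMulVec_of_mulVec_eq [DecidableEq n] (hM : M.IsHermitian)
    (hneg : (Finset.univ.filter fun i => hM.eigenvalues i < 0).card ≤ 1) (hx : M *ᵥ x = j)
    (ha : 0 ≤ a) (ht : j ⬝ᵥ x < 0) (h : a + b * (j ⬝ᵥ x) ≤ 0) :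
    (a • M + b • vecMulVec j j).PosSemidef := by
  have hMs := isHermitian_iff_isSymm.mp hM
  have hsymm : (a • M + b • vecMulVec j j).IsHermitian :=
    isHermitian_iff_isSymm.mpr ((hMs.smul a).add (IsSymm.smul (transpose_vecMulVec j j) b))
  refine .of_dotProduct_mulVec_nonneg hsymm fun y => ?_
  have hxx : x ⬝ᵥ M *ᵥ x = j ⬝ᵥ x := by rw [hx, dotProduct_comm]
  have hxy : x ⬝ᵥ M *ᵥ y = j ⬝ᵥ y := by rw [← hMs.mulVec_dotProduct, hx]
  have hcs := hM.mul_le_sq_of_card_neg_le_one hneg (hxx ▸ ht) y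
  rw [hxx, hxy] at hcs
  rw [star_trivial, dotProduct_smul_add_smul_vecMulVec_mulVec]
  nlinarith [mul_nonneg ha (sub_nonneg.mpr hcs), mul_nonneg (neg_nonneg.mpr h) (sq_nonneg (j ⬝ᵥ y))]

theorem posSemidef_and_rank_eq_of_card_neg_le_one [DecidableEq n] (hM : M.IsHermitian)
    (hneg : (Finset.univ.filter fun i => hM.eigenvalues i < 0).card ≤ 1) (hx : M *ᵥ x = j)
    (ha : 0 < a) (hb : 0 < b) {r : ℕ}
    (hle : ∀ N : Matrix n n ℝ, M * N * M = M → j ⬝ᵥ N *ᵥ j ≤ a / (-b))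
    (hr : ∀ N : Matrix n n ℝ, M * N * M = M →
      (r : ℤ) = if j ⬝ᵥ N *ᵥ j = a / (-b) then (M.rank : ℤ) - 1 else M.rank) :
    (a • M + b • vecMulVec j j).PosSemidef ∧ (a • M + b • vecMulVec j j).rank = r := by
  have hMs := isHermitian_iff_isSymm.mp hM
  obtain ⟨N, hN⟩ := M.exists_mul_mul_eq_self
  have hjNj : j ⬝ᵥ N *ᵥ j = j ⬝ᵥ x := by
    rw [← hx, hMs.mulVec_dotProduct_mulVec_of_mul_mul_eq_self hN, hx, dotProduct_comm]
  have hb' : -b ≠ 0 := neg_ne_zero.mpr hb.ne'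
  have hthreshold : j ⬝ᵥ x = a / (-b) ↔ a + b * (j ⬝ᵥ x) = 0 := by
    rw [eq_div_iff hb']
    constructor <;> intro h <;> linarith
  have hab : a + b * (j ⬝ᵥ x) ≤ 0 := by
    have := (le_div_iff_of_neg (neg_neg_of_pos hb)).mp (hjNj ▸ hle N hN)
    linarith
  have ht : j ⬝ᵥ x < 0 := by nlinarith
  have hj : j ≠ 0 := by rintro rfl; simp at ht
  refine ⟨posSemidef_smul_add_smul_vecMulVec_of_mulVec_eq hM hneg hx ha.le ht hab, ?_⟩
  have hr := hr N hN
  rw [hjNj, if_congr hthreshold rfl rfl,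
    ← rank_smul_add_smul_vecMulVec_of_mulVec_eq hMs hx ha.ne' hj] at hr
  exact_mod_cast hr.symm

end RankOneUpdate

theorem stmt12_general (n : ℕ)
    (α β lam : ℝ) (hβα : β < α) (hα₀ : 0 < α)
    (hlam : lam = (1 - α) / (α - β))
    (G : SimpleGraph (Fin n)) [DecidableRel G.Adj]
    (M : Matrix (Fin n) (Fin n) ℝ)
    (hM : M = lam • (1 : Matrix (Fin n) (Fin n) ℝ) - G.adjMatrix ℝ)
    (hherm : M.IsHermitian)
    (r : ℕ)
    (hcase :
      (M.PosDef ∧ r = n) ∨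
      (M.PosSemidef ∧ M.det = 0 ∧ r = M.rank + 1) ∨
      ((Finset.univ.filter fun i => hherm.eigenvalues i < 0).card = 1 ∧
        (∃ x : Fin n → ℝ, M *ᵥ x = fun _ => 1) ∧
        (∀ N : Matrix (Fin n) (Fin n) ℝ, M * N * M = M →
          (fun _ => (1 : ℝ)) ⬝ᵥ (N *ᵥ fun _ => 1) ≤ (α - β) / (-α)) ∧
        (∀ N : Matrix (Fin n) (Fin n) ℝ, M * N * M = M →
          (r : ℤ) = if (fun _ => (1 : ℝ)) ⬝ᵥ (N *ᵥ fun _ => 1) = (α - β) / (-α)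
            then (M.rank : ℤ) - 1 else (M.rank : ℤ)))) :
    ∃ u : Fin n → EuclideanSpace ℝ (Fin r),
      (∀ i, ‖u i‖ = 1) ∧
      Module.finrank ℝ (Submodule.span ℝ (Set.range u)) = r ∧
      ∀ i j, i ≠ j → rinner (u i) (u j) = if G.Adj i j then β else α := by
  set j : Fin n → ℝ := fun _ => 1
  set Γ := (α - β) • M + α • vecMulVec j j
  have hab : 0 < α - β := sub_pos.mpr hβα
  have hΓ : Γ.PosSemidef ∧ Γ.rank = r := by
    rcases hcase with ⟨hpd, rfl⟩ | ⟨hpsd, hdet, rfl⟩ | ⟨hneg, ⟨x, hx⟩, hle, hr⟩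
    · refine ⟨posSemidef_smul_add_smul_vecMulVec hpd.posSemidef hab.le hα₀.le, ?_⟩
      rw [rank_of_isUnit _ (posDef_smul_add_smul_vecMulVec hpd hab hα₀.le).isUnit,
        Fintype.card_fin]
    · refine ⟨posSemidef_smul_add_smul_vecMulVec hpsd hab.le hα₀.le,
        rank_smul_add_smul_vecMulVec_of_det_eq_zero hpsd (fun i k hik => ?_) hdet
          (fun _ => one_pos) hab hα₀⟩
      by_cases hG : G.Adj i k <;> simp [hM, hik, hG]
    · exact posSemidef_and_rank_eq_of_card_neg_le_one hherm hneg.le hx hab hα₀ hle hr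
  obtain ⟨u, hu⟩ := hΓ.1.exists_gram_eq_of_rank_eq hΓ.2
  refine ⟨u, fun i => ?_, by rw [← rank_gram, hu, hΓ.2], fun i k hik => ?_⟩
  · have h : ‖u i‖ ^ 2 = 1 := by
      rw [← real_inner_self_eq_norm_sq, ← gram_apply, hu]
      simp [Γ, j, hM, hlam, vecMulVec]
      field_simp
      ring
    exact (pow_eq_one_iff_of_nonneg (norm_nonneg _) two_ne_zero).mp h
  · rw [rinner, ← gram_apply, hu]
    by_cases hG : G.Adj i k <;> simp [Γ, j, hM, vecMulVec, hik, hG]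

/-- converse construction for `{α,β}`-codes with `α > 0` from the
`β`-graph. If an `n`-vertex graph `G` (with `M = λI - A`, `λ = (1-α)/(α-β)`) satisfies
one of the three spectral conditions of Theorem 4.2 for a positive integer `r`, then
there is a spherical `{α,β}`-code of size `n` and rank `r` in `ℝ^r` whose associated
`β`-graph is `G`. -/
theorem stmt12 (n : ℕ)
    (α β lam : ℝ) (hβ₁ : -1 ≤ β) (hβα : β < α) (hα : α < 1) (hα₀ : 0 < α)
    (hlam : lam = (1 - α) / (α - β))
    (G : SimpleGraph (Fin n)) [DecidableRel G.Adj]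
    (M : Matrix (Fin n) (Fin n) ℝ)
    (hM : M = lam • (1 : Matrix (Fin n) (Fin n) ℝ) - G.adjMatrix ℝ)
    (hherm : M.IsHermitian)
    (r : ℕ) (hr : 0 < r)
    (hcase :
      (M.PosDef ∧ r = n) ∨
      (M.PosSemidef ∧ M.det = 0 ∧ r = M.rank + 1) ∨
      ((Finset.univ.filter fun i => hherm.eigenvalues i < 0).card = 1 ∧
        (∃ x : Fin n → ℝ, M *ᵥ x = fun _ => 1) ∧
        (∀ N : Matrix (Fin n) (Fin n) ℝ, M * N * M = M →
          (fun _ => (1 : ℝ)) ⬝ᵥ (N *ᵥ fun _ => 1) ≤ (α - β) / (-α)) ∧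
        (∀ N : Matrix (Fin n) (Fin n) ℝ, M * N * M = M →
          (r : ℤ) = if (fun _ => (1 : ℝ)) ⬝ᵥ (N *ᵥ fun _ => 1) = (α - β) / (-α)
            then (M.rank : ℤ) - 1 else (M.rank : ℤ)))) :
    ∃ u : Fin n → EuclideanSpace ℝ (Fin r),
      (∀ i, ‖u i‖ = 1) ∧
      Module.finrank ℝ (Submodule.span ℝ (Set.range u)) = r ∧
      ∀ i j, i ≠ j → rinner (u i) (u j) = if G.Adj i j then β else α :=
  stmt12_general n α β lam hβα hα₀ hlam G M hM hherm r hcase
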